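/- arXiv:0711.1082 — 6 statements merged into one kernel-verified Lean document; each statement's English description precedes it below -/
import Mathlib

section
/- Let (W, W') be an exchangeable pair of ℝ^d-valued random vectors with E[W] = 0, positive definite covariance Σ = E[W Wᵗ], and E[W' - W | W] = -Λ W for an invertible d×d matrix Λ (remainder R = 0). Then the matrix Σ^{-1/2} Λ Σ^{1/2} is symmetric. -/
open MeasureTheory ProbabilityTheory Matrix

/-!
Conditioning on `W` and pulling `W` out of the conditional expectation turns the regression
condition into `E[(W' - W) Wᵀ] = -Λ Σ`. Exchangeability makes `E[W' Wᵀ]` symmetric, hence also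
`E[(W' - W) Wᵀ] = E[W' Wᵀ] - Σ`. So `Λ Σ = Λ Q Q` is symmetric, and then so is
`Q⁻¹ Λ Q = Q⁻¹ (Λ Q Q) Q⁻¹`, because `Q` is.
-/

lemma Matrix.isSymm_inv_mul_mul_of_isSymm_mul_mul_self {n R : Type*} [Fintype n] [DecidableEq n]
    [CommRing R] {A Q : Matrix n n R} (hQ : Q.IsSymm) (hQdet : IsUnit Q.det)
    (hA : (A * (Q * Q)).IsSymm) : (Q⁻¹ * A * Q).IsSymm := by
  have hconj : Q⁻¹ * A * Q = Q⁻¹ * (A * (Q * Q)) * Q⁻¹ := by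
    simp only [Matrix.mul_assoc, mul_nonsing_inv _ hQdet, Matrix.mul_one]
  rw [hconj, IsSymm, transpose_mul, transpose_mul, hQ.inv.eq, hA.eq]
  simp only [Matrix.mul_assoc]

section

variable {Ω : Type*} {m₀ : MeasurableSpace Ω} {μ : Measure Ω}

lemma integrable_mul_of_memLp_two {f g : Ω → ℝ} (hf : MemLp f 2 μ) (hg : MemLp g 2 μ) :
    Integrable (fun ω => f ω * g ω) μ :=
  hf.integrable_mul hg

lemma integral_mul_eq_integral_mul_of_condExp_ae_eq {m : MeasurableSpace Ω} (hm : m ≤ m₀)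
    [SigmaFinite (μ.trim hm)] {f g h : Ω → ℝ} (hg : StronglyMeasurable[m] g)
    (hgf : Integrable (g * f) μ) (hf : Integrable f μ) (hfh : μ[f | m] =ᵐ[μ] h) :
    ∫ ω, g ω * f ω ∂μ = ∫ ω, g ω * h ω ∂μ := calc
  ∫ ω, g ω * f ω ∂μ = ∫ ω, μ[g * f | m] ω ∂μ := (integral_condExp hm).symm
  _ = ∫ ω, g ω * h ω ∂μ :=
    integral_congr_ae ((condExp_mul_of_stronglyMeasurable_left hg hgf hf).trans
      (Filter.EventuallyEq.rfl.mul hfh))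

lemma integral_comp_swap_of_map_eq {E : Type*} [MeasurableSpace E] {X Y : Ω → E}
    (hX : Measurable X) (hY : Measurable Y)
    (hexch : μ.map (fun ω => (X ω, Y ω)) = μ.map (fun ω => (Y ω, X ω)))
    {F : E × E → ℝ} (hF : Measurable F) :
    ∫ ω, F (Y ω, X ω) ∂μ = ∫ ω, F (X ω, Y ω) ∂μ := by
  rw [← integral_map (hY.prodMk hX).aemeasurable hF.aestronglyMeasurable, ← hexch,
    integral_map (hX.prodMk hY).aemeasurable hF.aestronglyMeasurable]

variable {ι : Type*} {X Y : Ω → ι → ℝ}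

lemma integral_mul_sub_comm_of_map_eq (hX : Measurable X) (hY : Measurable Y)
    (hexch : μ.map (fun ω => (X ω, Y ω)) = μ.map (fun ω => (Y ω, X ω)))
    (hXL2 : ∀ i, MemLp (fun ω => X ω i) 2 μ) (hYL2 : ∀ i, MemLp (fun ω => Y ω i) 2 μ)
    (i j : ι) :
    ∫ ω, X ω j * (Y ω i - X ω i) ∂μ = ∫ ω, X ω i * (Y ω j - X ω j) ∂μ := by
  have hcross : ∫ ω, X ω j * Y ω i ∂μ = ∫ ω, X ω i * Y ω j ∂μ := by
    have := integral_comp_swap_of_map_eq hX hY hexch (F := fun p => p.1 i * p.2 j) (by fun_prop)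
    simpa only [mul_comm] using this
  simp only [mul_sub]
  rw [integral_sub (integrable_mul_of_memLp_two (hXL2 j) (hYL2 i))
      (integrable_mul_of_memLp_two (hXL2 j) (hXL2 i)),
    integral_sub (integrable_mul_of_memLp_two (hXL2 i) (hYL2 j))
      (integrable_mul_of_memLp_two (hXL2 i) (hXL2 j)), hcross]
  simp only [mul_comm]

lemma integral_mul_mulVec_apply [Fintype ι] {Sig : Matrix ι ι ℝ}
    (hXL2 : ∀ i, MemLp (fun ω => X ω i) 2 μ) (hcov : ∀ i j, ∫ ω, X ω i * X ω j ∂μ = Sig i j)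
    (A : Matrix ι ι ℝ) (i j : ι) :
    ∫ ω, X ω j * (A *ᵥ X ω) i ∂μ = (A * Sig) i j := by
  calc ∫ ω, X ω j * (A *ᵥ X ω) i ∂μ = ∫ ω, ∑ k, A i k * (X ω k * X ω j) ∂μ := by
        congr 1 with ω
        simp only [mulVec, dotProduct, Finset.mul_sum]
        exact Finset.sum_congr rfl fun k _ => by ring
    _ = ∑ k, A i k * ∫ ω, X ω k * X ω j ∂μ := by
        rw [integral_finsetSum _ fun k _ =>
          (integrable_mul_of_memLp_two (hXL2 k) (hXL2 j)).const_mul (A i k)]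
        simp only [integral_const_mul]
    _ = (A * Sig) i j := by simp only [hcov, mul_apply]

lemma isSymm_mul_cov_of_condExp_sub_eq_neg_mulVec [Fintype ι] [IsFiniteMeasure μ]
    {Λ Sig : Matrix ι ι ℝ}
    (hX : Measurable X) (hY : Measurable Y)
    (hexch : μ.map (fun ω => (X ω, Y ω)) = μ.map (fun ω => (Y ω, X ω)))
    (hXL2 : ∀ i, MemLp (fun ω => X ω i) 2 μ) (hYL2 : ∀ i, MemLp (fun ω => Y ω i) 2 μ)
    (hcov : ∀ i j, ∫ ω, X ω i * X ω j ∂μ = Sig i j)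
    (hcond : ∀ i, μ[(fun ω => Y ω i - X ω i) | MeasurableSpace.comap X inferInstance]
        =ᵐ[μ] fun ω => -(Λ *ᵥ X ω) i) :
    (Λ * Sig).IsSymm := by
  have hregr : ∀ i j, ∫ ω, X ω j * (Y ω i - X ω i) ∂μ = -(Λ * Sig) i j := fun i j => by
    have hXj : StronglyMeasurable[MeasurableSpace.comap X inferInstance] fun ω => X ω j :=
      ((measurable_pi_apply j).comp (comap_measurable X)).stronglyMeasurable
    have hincr : MemLp (fun ω => Y ω i - X ω i) 2 μ := (hYL2 i).sub (hXL2 i)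
    rw [integral_mul_eq_integral_mul_of_condExp_ae_eq hX.comap_le hXj
      (integrable_mul_of_memLp_two (hXL2 j) hincr) (hincr.integrable one_le_two) (hcond i)]
    simp only [mul_neg, integral_neg, integral_mul_mulVec_apply hXL2 hcov]
  refine IsSymm.ext fun i j => neg_injective ?_
  rw [← hregr, ← hregr, integral_mul_sub_comm_of_map_eq hX hY hexch hXL2 hYL2]

end

theorem lambda_hat_symm_of_exchangeable_general
    {Ω : Type*} [MeasurableSpace Ω] (μ : Measure Ω) [IsProbabilityMeasure μ]
    (d : ℕ) (W W' : Ω → (Fin d → ℝ)) (Λ Sig Q : Matrix (Fin d) (Fin d) ℝ)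
    (hWmeas : Measurable W) (hW'meas : Measurable W')
    (hexch : Measure.map (fun ω => (W ω, W' ω)) μ = Measure.map (fun ω => (W' ω, W ω)) μ)
    (hcov : ∀ i j, ∫ ω, W ω i * W ω j ∂μ = Sig i j)
    (hWL2 : ∀ i, MemLp (fun ω => W ω i) 2 μ)
    (hW'L2 : ∀ i, MemLp (fun ω => W' ω i) 2 μ)
    (hQ : Q.PosDef) (hQsq : Q * Q = Sig)
    (hcond : ∀ i, μ[(fun ω => W' ω i - W ω i) | MeasurableSpace.comap W inferInstance]
        =ᵐ[μ] fun ω => -(Λ.mulVec (W ω)) i) :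
    (Q⁻¹ * Λ * Q).IsSymm := by
  have hΛSig : (Λ * Sig).IsSymm :=
    isSymm_mul_cov_of_condExp_sub_eq_neg_mulVec hWmeas hW'meas hexch hWL2 hW'L2 hcov hcond
  rw [← hQsq] at hΛSig
  exact isSymm_inv_mul_mul_of_isSymm_mul_mul_self (isHermitian_iff_isSymm.mp hQ.isHermitian)
    ((isUnit_iff_isUnit_det Q).mp hQ.isUnit) hΛSig

/-- For an exchangeable pair with `E W = 0`, positive definite covariance `Sig`,
`E[W' - W | W] = -Λ W` with `Λ` invertible, the matrix `Sig^{-1/2} Λ Σ^{1/2}` is symmetric.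
Here `Q` is the (unique) symmetric positive definite square root of `Σ`. -/
theorem lambda_hat_symm_of_exchangeable
    {Ω : Type*} [MeasurableSpace Ω] (μ : Measure Ω) [IsProbabilityMeasure μ]
    (d : ℕ) (W W' : Ω → (Fin d → ℝ)) (Λ Sig Q : Matrix (Fin d) (Fin d) ℝ)
    (hWmeas : Measurable W) (hW'meas : Measurable W')
    (hexch : Measure.map (fun ω => (W ω, W' ω)) μ = Measure.map (fun ω => (W' ω, W ω)) μ)
    (hmean : ∀ i, ∫ ω, W ω i ∂μ = 0)
    (hSig : Sig.PosDef)
    (hcov : ∀ i j, ∫ ω, W ω i * W ω j ∂μ = Sig i j)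
    (hWL2 : ∀ i, MemLp (fun ω => W ω i) 2 μ)
    (hW'L2 : ∀ i, MemLp (fun ω => W' ω i) 2 μ)
    (hΛ : IsUnit Λ.det)
    (hQ : Q.PosDef) (hQsq : Q * Q = Sig)
    (hcond : ∀ i, μ[(fun ω => W' ω i - W ω i) | MeasurableSpace.comap W inferInstance]
        =ᵐ[μ] fun ω => -(Λ.mulVec (W ω)) i) :
    (Q⁻¹ * Λ * Q).IsSymm :=
  lambda_hat_symm_of_exchangeable_general μ d W W' Λ Sig Q hWmeas hW'meas hexch hcov hWL2 hW'L2 hQ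
    hQsq hcond
end

section
/- Let Λ be a lower triangular real d×d matrix with inf_i |Λ_{ii}| = γ > 0 and |Λ_{ij}| ≤ a for all j < i (with a > 0). Then for every i, λ^{(i)} := Σ_{m=1}^d |(Λ^{-1})_{m,i}| satisfies λ^{(i)} ≤ (a/γ + 1)^{d-1} / γ. -/
/-!
The `i`-th column `x` of `Λ⁻¹` solves `Λ x = eᵢ`. Forward substitution gives
`γ |x m| ≤ δ_{mi} + a ∑_{k<m} |x k|`, so the partial sums `S m = ∑_{k<m} |x k|` satisfy
`S (m+1) ≤ (1 + a/γ) S m + δ_{mi}/γ`, and the discrete Grönwall inequality bounds `S d` by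
`(1 + a/γ)^(d-1)/γ`.
-/

open Finset Matrix

theorem Finset.sum_fin_Iio_eq_sum_range {M : Type*} [AddCommMonoid M] {n : ℕ} (a : Fin n)
    (f : Fin n → M) :
    ∑ i ∈ Iio a, f i = ∑ i ∈ range a, if h : i < n then f ⟨i, h⟩ else 0 := by
  rw [← Nat.Iio_eq_range, ← Fin.map_valEmbedding_Iio, sum_map]
  exact sum_congr rfl fun i _ => by simp

theorem sum_range_le_of_le_add_mul_sum_range {R : Type*} [CommSemiring R]
    [PartialOrder R] [IsOrderedRing R] {y b : ℕ → R} {c : R} (hc : 0 ≤ c) (hb : ∀ n, 0 ≤ b n)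
    (h : ∀ n, y n ≤ b n + c * ∑ k ∈ range n, y k) (N : ℕ) :
    ∑ k ∈ range N, y k ≤ (1 + c) ^ (N - 1) * ∑ k ∈ range N, b k := by
  have hrec : ∀ n ≥ 0, ∑ k ∈ range (n + 1), y k ≤ (1 + c) * ∑ k ∈ range n, y k + b n := by
    intro n _
    calc ∑ k ∈ range (n + 1), y k = ∑ k ∈ range n, y k + y n := sum_range_succ y n
      _ ≤ ∑ k ∈ range n, y k + (b n + c * ∑ k ∈ range n, y k) := by gcongr; exact h n
      _ = (1 + c) * ∑ k ∈ range n, y k + b n := by ring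
  calc ∑ k ∈ range N, y k ≤ ∑ k ∈ range N, b k * ∏ _i ∈ Ico (k + 1) N, (1 + c) := by
        simpa using discrete_gronwall_prod_general (u := fun n => ∑ k ∈ range n, y k) hrec
          (fun _ _ => add_nonneg zero_le_one hc) N.zero_le
    _ ≤ ∑ k ∈ range N, b k * (1 + c) ^ (N - 1) := by
        gcongr with k
        · exact hb k
        · rw [prod_const, Nat.card_Ico]
          exact pow_le_pow_right₀ (le_add_of_nonneg_right hc) (by omega)
    _ = (1 + c) ^ (N - 1) * ∑ k ∈ range N, b k := by rw [← sum_mul, mul_comm]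

namespace Matrix.IsLowerTriangular

variable {ι R : Type*} [Fintype ι] [LinearOrder ι] [LocallyFiniteOrderBot ι]

theorem mulVec_apply [NonUnitalNonAssocSemiring R] {M : Matrix ι ι R} (hM : M.IsLowerTriangular)
    (x : ι → R) (m : ι) : (M *ᵥ x) m = M m m * x m + ∑ k ∈ Iio m, M m k * x k := by
  rw [mulVec, dotProduct, ← sum_subset (subset_univ (Iic m)), Iic_eq_cons_Iio, sum_cons]
  intro k _ hk
  rw [hM (show OrderDual.toDual k < OrderDual.toDual m by simpa using hk), zero_mul]

theorem mul_abs_le_abs_mulVec_add [Ring R] [LinearOrder R] [IsStrictOrderedRing R]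
    {M : Matrix ι ι R} (hM : M.IsLowerTriangular) {γ a : R} (hdiag : ∀ i, γ ≤ |M i i|)
    (hoff : ∀ i j, j < i → |M i j| ≤ a) (x : ι → R) (m : ι) :
    γ * |x m| ≤ |(M *ᵥ x) m| + a * ∑ k ∈ Iio m, |x k| := by
  have hsolve : M m m * x m = (M *ᵥ x) m - ∑ k ∈ Iio m, M m k * x k := by
    rw [hM.mulVec_apply]; abel
  calc γ * |x m| ≤ |M m m * x m| := by rw [abs_mul]; gcongr; exact hdiag m
    _ ≤ |(M *ᵥ x) m| + ∑ k ∈ Iio m, |M m k * x k| := by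
        rw [hsolve]
        exact (abs_sub _ _).trans (by gcongr; exact abs_sum_le_sum_abs _ _)
    _ ≤ |(M *ᵥ x) m| + a * ∑ k ∈ Iio m, |x k| := by
        rw [mul_sum]
        gcongr with k hk
        rw [abs_mul]
        gcongr
        exact hoff m k (mem_Iio.mp hk)

theorem sum_abs_le_pow_mul_sum_abs_mulVec [Field R] [LinearOrder R] [IsStrictOrderedRing R]
    {d : ℕ} {M : Matrix (Fin d) (Fin d) R} (hM : M.IsLowerTriangular) {γ a : R} (hγ : 0 < γ)
    (ha : 0 ≤ a) (hdiag : ∀ i, γ ≤ |M i i|) (hoff : ∀ i j, j < i → |M i j| ≤ a)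
    (x : Fin d → R) :
    ∑ m, |x m| ≤ (a / γ + 1) ^ (d - 1) * (∑ m, |(M *ᵥ x) m|) / γ := by
  set y : ℕ → R := fun n => if h : n < d then |x ⟨n, h⟩| else 0
  set b : ℕ → R := fun n => if h : n < d then |(M *ᵥ x) ⟨n, h⟩| / γ else 0
  have hy : ∀ n, 0 ≤ y n := fun n => by dsimp only [y]; split <;> positivity
  have hb : ∀ n, 0 ≤ b n := fun n => by dsimp only [b]; split <;> positivity
  have hrec : ∀ n, y n ≤ b n + a / γ * ∑ k ∈ range n, y k := by
    intro n
    by_cases hn : n < d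
    · have h := hM.mul_abs_le_abs_mulVec_add hdiag hoff x ⟨n, hn⟩
      rw [sum_fin_Iio_eq_sum_range] at h
      simp only [y, b, dif_pos hn]
      rw [div_mul_eq_mul_div, ← add_div, le_div_iff₀ hγ]
      linarith
    · simp only [y, b, dif_neg hn, zero_add]
      exact mul_nonneg (div_nonneg ha hγ.le) (sum_nonneg fun k _ => hy k)
  rw [mul_div_assoc, sum_div, sum_fin_eq_sum_range, sum_fin_eq_sum_range, add_comm (a / γ)]
  exact sum_range_le_of_le_add_mul_sum_range (div_nonneg ha hγ.le) hb hrec d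

end Matrix.IsLowerTriangular

/-- For a lower triangular matrix `Λ` with diagonal entries at least `γ > 0` in
absolute value and strictly-lower entries bounded by `a`, the ℓ¹-norm of each column of
`Λ⁻¹` is at most `(a/γ + 1)^(d-1)/γ`. -/
theorem inverse_column_sum_bound_lower_triangular
    (d : ℕ) (Λ : Matrix (Fin d) (Fin d) ℝ)
    (hlow : ∀ i j : Fin d, i < j → Λ i j = 0)
    (γ a : ℝ) (hγ : 0 < γ) (ha : 0 < a)
    (hdiag : ∀ i, γ ≤ |Λ i i|)
    (hoff : ∀ i j : Fin d, j < i → |Λ i j| ≤ a) :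
    ∀ i : Fin d, ∑ m, |Λ⁻¹ m i| ≤ (a / γ + 1) ^ (d - 1) / γ := by
  intro i
  have hΛ : Λ.IsLowerTriangular := fun p q h => hlow p q h
  have hdet : IsUnit Λ.det := by
    rw [det_of_isLowerTriangular Λ hΛ]
    exact (prod_ne_zero_iff.mpr fun k _ => abs_pos.mp (hγ.trans_le (hdiag k))).isUnit
  have hcol : Λ *ᵥ Λ⁻¹.col i = Pi.single i 1 := by
    rw [← mulVec_single_one, mulVec_mulVec, mul_nonsing_inv Λ hdet, one_mulVec]
  calc ∑ m, |Λ⁻¹ m i|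
      ≤ (a / γ + 1) ^ (d - 1) * (∑ m, |(Λ *ᵥ Λ⁻¹.col i) m|) / γ :=
        hΛ.sum_abs_le_pow_mul_sum_abs_mulVec hγ ha.le hdiag hoff (Λ⁻¹.col i)
    _ = (a / γ + 1) ^ (d - 1) / γ := by simp [hcol, Pi.single_apply, apply_ite]
end

section
/- Let Λ_E be a lower triangular d×d real matrix with all diagonal entries equal to 1 and all strictly lower triangular entries bounded in absolute value by c ≥ 0. Then the matrix 1-norm of its inverse satisfies ‖Λ_E^{-1}‖₁ ≤ (c + 1)^{d-1}, where ‖A‖₁ = sup_j Σ_i |A_{ij}|. -/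
/-!
The `j`-th column `x` of `Λ_E⁻¹` solves `Λ_E x = e_j`. Forward substitution gives
`|x_i| ≤ δ_ij + c ∑_{k<i} |x_k|`, so the partial sums `S_n = ∑_{k<n} |x_k|` vanish for `n ≤ j`,
`S_{j+1} ≤ 1`, and `S_{n+1} ≤ (1 + c) S_n` afterwards; hence `S_d ≤ (1 + c)^(d-1-j)`.
-/

open Matrix Finset

theorem Finset.sum_range_le_of_le_ite_add_mul_sum_range {R : Type*} [CommRing R]
    [PartialOrder R] [IsOrderedRing R] {a : ℕ → R} {c : R} (hc : 0 ≤ c) (j : ℕ)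
    (ha : ∀ n, a n ≤ (if n = j then 1 else 0) + c * ∑ k ∈ range n, a k) (n : ℕ) :
    ∑ k ∈ range n, a k ≤ if j < n then (1 + c) ^ (n - 1 - j) else 0 := by
  induction n with
  | zero => simp
  | succ n ih =>
    have hstep : ∑ k ∈ range (n + 1), a k ≤
        (1 + c) * ∑ k ∈ range n, a k + if n = j then 1 else 0 := by
      rw [sum_range_succ]; linear_combination ha n
    have hc1 : 0 ≤ 1 + c := add_nonneg zero_le_one hc
    rcases lt_trichotomy n j with hnj | rfl | hjn
    · rw [if_neg hnj.not_gt] at ih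
      rw [if_neg hnj.ne, add_zero] at hstep
      rw [if_neg (by omega)]
      exact hstep.trans (mul_nonpos_of_nonneg_of_nonpos hc1 ih)
    · rw [if_neg (lt_irrefl n)] at ih
      rw [if_pos rfl] at hstep
      rw [if_pos (Nat.lt_succ_self n), show n + 1 - 1 - n = 0 by omega, pow_zero]
      exact hstep.trans (by simpa using mul_nonpos_of_nonneg_of_nonpos hc1 ih)
    · rw [if_pos hjn] at ih
      rw [if_neg hjn.ne', add_zero] at hstep
      rw [if_pos (by omega), show n + 1 - 1 - j = n - 1 - j + 1 by omega, pow_succ']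
      exact hstep.trans (mul_le_mul_of_nonneg_left ih hc1)

theorem Fin.sum_Iio_eq_sum_range {M : Type*} [AddCommMonoid M] {d : ℕ} (f : Fin d → M)
    (i : Fin d) : ∑ k ∈ Iio i, f k = ∑ n ∈ range i, if h : n < d then f ⟨n, h⟩ else 0 := by
  rw [← Nat.Iio_eq_range, ← Fin.map_valEmbedding_Iio, sum_map]
  exact sum_congr rfl fun k _ => by simp

namespace Matrix.IsLowerTriangular

section

variable {ι R : Type*} [LinearOrder ι] [Fintype ι] [LocallyFiniteOrderBot ι]

theorem mulVec_apply_eq_add_sum_Iio [NonAssocSemiring R] {L : Matrix ι ι R}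
    (hL : L.IsLowerTriangular) (hdiag : ∀ i, L i i = 1) (x : ι → R) (i : ι) :
    (L *ᵥ x) i = x i + ∑ k ∈ Iio i, L i k * x k := by
  have hsupp : ∑ k, L i k * x k = ∑ k ∈ Iic i, L i k * x k :=
    (sum_subset (subset_univ _) fun k _ hk => by
      rw [hL (not_le.mp (by simpa using hk)), zero_mul]).symm
  rw [mulVec, dotProduct, hsupp, ← Iio_insert, sum_insert notMem_Iio_self, hdiag, one_mul]

theorem abs_le_abs_mulVec_add_mul_sum_Iio [CommRing R] [LinearOrder R] [IsOrderedRing R]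
    {L : Matrix ι ι R} (hL : L.IsLowerTriangular) (hdiag : ∀ i, L i i = 1) {c : R}
    (hoff : ∀ i k, k < i → |L i k| ≤ c) (x : ι → R) (i : ι) :
    |x i| ≤ |(L *ᵥ x) i| + c * ∑ k ∈ Iio i, |x k| := by
  have hx : x i = (L *ᵥ x) i - ∑ k ∈ Iio i, L i k * x k := by
    rw [hL.mulVec_apply_eq_add_sum_Iio hdiag]; ring
  calc |x i| ≤ |(L *ᵥ x) i| + |∑ k ∈ Iio i, L i k * x k| := by rw [hx]; exact abs_sub _ _
    _ ≤ |(L *ᵥ x) i| + ∑ k ∈ Iio i, |L i k| * |x k| := by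
      gcongr; simpa only [abs_mul] using abs_sum_le_sum_abs (fun k => L i k * x k) (Iio i)
    _ ≤ |(L *ᵥ x) i| + c * ∑ k ∈ Iio i, |x k| := by
      rw [mul_sum]; gcongr with k hk
      exact hoff i k (mem_Iio.mp hk)

end

theorem sum_abs_le_pow_of_mulVec_eq_single {R : Type*} [CommRing R] [LinearOrder R]
    [IsOrderedRing R] {d : ℕ} {L : Matrix (Fin d) (Fin d) R} (hL : L.IsLowerTriangular)
    (hdiag : ∀ i, L i i = 1) {c : R} (hc : 0 ≤ c) (hoff : ∀ i k, k < i → |L i k| ≤ c)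
    {x : Fin d → R} {j : Fin d} (hx : L *ᵥ x = Pi.single j 1) :
    ∑ i, |x i| ≤ (1 + c) ^ (d - 1 - j) := by
  set a : ℕ → R := fun n => if h : n < d then |x ⟨n, h⟩| else 0
  have ha_nonneg : ∀ n, 0 ≤ a n := fun n => by simp only [a]; split_ifs <;> positivity
  have ha : ∀ n, a n ≤ (if n = j then 1 else 0) + c * ∑ k ∈ range n, a k := by
    intro n
    by_cases hn : n < d
    · have := hL.abs_le_abs_mulVec_add_mul_sum_Iio hdiag hoff x ⟨n, hn⟩
      rw [hx, Fin.sum_Iio_eq_sum_range] at this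
      simpa [a, hn, Pi.single_apply, Fin.ext_iff, apply_ite] using this
    · simp only [a, dif_neg hn]
      exact add_nonneg (by split_ifs <;> simp) (mul_nonneg hc (sum_nonneg fun k _ => ha_nonneg k))
  rw [sum_fin_eq_sum_range]
  simpa [j.isLt] using sum_range_le_of_le_ite_add_mul_sum_range hc j ha d

end Matrix.IsLowerTriangular

/-- Lemeire's bound: For a unit lower triangular matrix `Λ_E` with strictly
lower entries bounded in absolute value by `c ≥ 0`, the maximum absolute column sum norm of
`Λ_E⁻¹` is at most `(c+1)^(d-1)`. -/
theorem inverse_one_norm_bound_unit_lower_triangular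
    (d : ℕ) (ΛE : Matrix (Fin d) (Fin d) ℝ)
    (hlow : ∀ i j : Fin d, i < j → ΛE i j = 0)
    (hdiag : ∀ i, ΛE i i = 1)
    (c : ℝ) (hc : 0 ≤ c)
    (hoff : ∀ i j : Fin d, j < i → |ΛE i j| ≤ c) :
    ∀ j : Fin d, ∑ i, |ΛE⁻¹ i j| ≤ (c + 1) ^ (d - 1) := by
  intro j
  have hL : ΛE.IsLowerTriangular := hlow
  have hdet : IsUnit ΛE.det := by simp [det_of_isLowerTriangular ΛE hL, hdiag]
  have hcol : ΛE *ᵥ ΛE⁻¹.col j = Pi.single j 1 := by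
    rw [← mulVec_single_one, mulVec_mulVec, mul_nonsing_inv _ hdet, one_mulVec]
  calc ∑ i, |ΛE⁻¹ i j| ≤ (1 + c) ^ (d - 1 - j) :=
        hL.sum_abs_le_pow_of_mulVec_eq_single hdiag hc hoff hcol
    _ ≤ (c + 1) ^ (d - 1) := by
      rw [add_comm]; exact pow_le_pow_right₀ (by linarith) (by omega)
end

section
/- Let ξ₁, …, ξₙ be i.i.d. Bernoulli(p) random variables with 0 < p < 1 and cyclic convention ξ_{n+k} := ξ_k. For d ≥ 1 define V_d := Σ_{m=1}^n (ξ_m ξ_{m+1} ⋯ ξ_{m+d-1} - p^d). Then E[V_d²] = n p^d (1-p) Σ_{k=0}^{d-1} (1 + 2k) p^k. -/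
/-!
Write the `m`-th summand as `∏ i ∈ R m, ω i - p ^ d`, where `R m = {m, …, m + d - 1}` is the
cyclic window of the run. Under the Bernoulli law `x ^ 2` and `x` have the same mean, so
`E[∏_{R m} ω * ∏_{R m'} ω] = p ^ #(R m ∪ R m')` and
`E[V_d²] = ∑_{m,m'} (p ^ #(R m ∪ R m') - p ^ 2d)`. By translation invariance the inner sum
does not depend on `m`. Two windows at cyclic distance `k < d` have a union of size `d + k`,
and windows at distance `≥ d` are disjoint and contribute nothing; as `n ≥ 2d`, every distance
`1 ≤ k < d` occurs exactly twice. The resulting sum `p^d (1 - p^d) + 2 ∑_{0<k<d} (p^(d+k) - p^2d)`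
is the claimed closed form.
-/

open MeasureTheory Finset Fin.NatCast

noncomputable def bernoulliReal (p : ℝ) : Measure ℝ :=
  ENNReal.ofReal p • Measure.dirac 1 + ENNReal.ofReal (1 - p) • Measure.dirac 0

section Bernoulli

variable {p : ℝ}

instance (p : ℝ) : IsFiniteMeasure (bernoulliReal p) := by
  constructor
  simp [bernoulliReal]

lemma isProbabilityMeasure_bernoulliReal (hp0 : 0 ≤ p) (hp1 : p ≤ 1) :
    IsProbabilityMeasure (bernoulliReal p) := by
  constructor
  simp [bernoulliReal, ← ENNReal.ofReal_add hp0 (sub_nonneg.2 hp1)]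

lemma integrable_bernoulliReal (f : ℝ → ℝ) : Integrable f (bernoulliReal p) :=
  ((integrable_dirac (by simp)).smul_measure (by simp)).add_measure
    ((integrable_dirac (by simp)).smul_measure (by simp))

lemma integral_bernoulliReal (hp0 : 0 ≤ p) (hp1 : p ≤ 1) (f : ℝ → ℝ) :
    ∫ x, f x ∂bernoulliReal p = p * f 1 + (1 - p) * f 0 := by
  rw [bernoulliReal, integral_add_measure ((integrable_dirac (by simp)).smul_measure (by simp))
      ((integrable_dirac (by simp)).smul_measure (by simp)),
    integral_smul_measure, integral_smul_measure, integral_dirac, integral_dirac,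
    ENNReal.toReal_ofReal hp0, ENNReal.toReal_ofReal (sub_nonneg.2 hp1), smul_eq_mul, smul_eq_mul]

variable {ι : Type*} [Fintype ι] [DecidableEq ι]

lemma prod_mul_prod_eq_prod_ite (S T : Finset ι) (ω : ι → ℝ) :
    (∏ i ∈ S, ω i) * ∏ i ∈ T, ω i
      = ∏ i, (if i ∈ S then ω i else 1) * (if i ∈ T then ω i else 1) := by
  rw [prod_mul_distrib, prod_ite_mem, prod_ite_mem, univ_inter, univ_inter]

lemma integrable_prod_mul_prod_pi_bernoulliReal (S T : Finset ι) :
    Integrable (fun ω : ι → ℝ => (∏ i ∈ S, ω i) * ∏ i ∈ T, ω i)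
      (Measure.pi fun _ => bernoulliReal p) := by
  simp_rw [prod_mul_prod_eq_prod_ite S T]
  exact Integrable.fintype_prod
    (f := fun i x => (if i ∈ S then x else 1) * (if i ∈ T then x else 1))
    fun i => integrable_bernoulliReal _

lemma integral_prod_mul_prod_pi_bernoulliReal (hp0 : 0 ≤ p) (hp1 : p ≤ 1) (S T : Finset ι) :
    ∫ ω : ι → ℝ, (∏ i ∈ S, ω i) * ∏ i ∈ T, ω i ∂Measure.pi (fun _ => bernoulliReal p)
      = p ^ #(S ∪ T) := by
  simp_rw [prod_mul_prod_eq_prod_ite S T]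
  rw [integral_fintype_prod_eq_prod
    (fun i x => (if i ∈ S then x else 1) * (if i ∈ T then x else 1))]
  have hfactor : ∀ i, ∫ x, (if i ∈ S then x else 1) * (if i ∈ T then x else 1) ∂bernoulliReal p
      = if i ∈ S ∪ T then p else 1 := by
    intro i
    rw [integral_bernoulliReal hp0 hp1]
    by_cases hS : i ∈ S <;> by_cases hT : i ∈ T <;> simp [hS, hT]
  simp_rw [hfactor]
  rw [prod_ite_mem, univ_inter, prod_const]

end Bernoulli

lemma integral_sq_sum_sub_eq {Ω ι : Type*} [MeasurableSpace Ω] {μ : Measure Ω}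
    [IsProbabilityMeasure μ] (s : Finset ι) {X : ι → Ω → ℝ} {c : ℝ}
    (hX : ∀ i, Integrable (X i) μ) (hXX : ∀ i j, Integrable (fun ω => X i ω * X j ω) μ)
    (hmean : ∀ i, ∫ ω, X i ω ∂μ = c) :
    ∫ ω, (∑ i ∈ s, (X i ω - c)) ^ 2 ∂μ = ∑ i ∈ s, ∑ j ∈ s, (∫ ω, X i ω * X j ω ∂μ - c ^ 2) := by
  have hcov : ∀ i j, Integrable (fun ω => (X i ω - c) * (X j ω - c)) μ ∧
      ∫ ω, (X i ω - c) * (X j ω - c) ∂μ = ∫ ω, X i ω * X j ω ∂μ - c ^ 2 := by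
    intro i j
    have hexpand : ∀ ω, (X i ω - c) * (X j ω - c)
        = X i ω * X j ω - c * X i ω - c * X j ω + c ^ 2 := fun ω => by ring
    have h1 : Integrable (fun ω => X i ω * X j ω - c * X i ω) μ :=
      (hXX i j).sub ((hX i).const_mul c)
    have h2 : Integrable (fun ω => X i ω * X j ω - c * X i ω - c * X j ω) μ :=
      h1.sub ((hX j).const_mul c)
    simp_rw [hexpand]
    refine ⟨h2.add (integrable_const _), ?_⟩
    rw [integral_add h2 (integrable_const _), integral_sub h1 ((hX j).const_mul c),
      integral_sub (hXX i j) ((hX i).const_mul c), integral_const_mul, integral_const_mul,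
      hmean, hmean, integral_const, probReal_univ, one_smul]
    ring
  have hsq : ∀ ω, (∑ i ∈ s, (X i ω - c)) ^ 2 = ∑ i ∈ s, ∑ j ∈ s, (X i ω - c) * (X j ω - c) :=
    fun ω => by rw [sq, sum_mul_sum]
  simp_rw [hsq]
  rw [integral_finsetSum _ fun i _ => integrable_finsetSum _ fun j _ => (hcov i j).1]
  simp_rw [integral_finsetSum _ fun j _ => (hcov _ j).1, (hcov _ _).2]

lemma sum_range_min_min_sub_eq {M : Type*} [AddCommGroup M] {n d : ℕ} (hn : 2 * d ≤ n)
    (h : ℕ → M) (hd : h d = 0) :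
    ∑ t ∈ range n, h (min (min t (n - t)) d) = ∑ k ∈ range d, h k + ∑ k ∈ range d, h k - h 0 := by
  -- as `2 * d ≤ n`, at most one of `t` and `n - t` is below `d`
  have hsplit : ∀ t ∈ range n, h (min (min t (n - t)) d) = h (min t d) + h (min (n - t) d) := by
    intro t ht
    have := mem_range.1 ht
    rcases le_or_gt d t with hdt | htd
    · rw [min_eq_right hdt, hd, zero_add]
      congr 1
      omega
    · rw [min_eq_right (by omega : d ≤ n - t), hd, add_zero]
      congr 1
      omega
  have htrunc : ∀ N, d ≤ N → ∑ t ∈ range N, h (min t d) = ∑ k ∈ range d, h k := by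
    intro N hN
    have hzero : ∑ t ∈ Ico d N, h (min t d) = 0 :=
      sum_eq_zero fun t ht => by rw [min_eq_right (mem_Ico.1 ht).1, hd]
    rw [← sum_range_add_sum_Ico _ hN, hzero, add_zero]
    exact sum_congr rfl fun t ht => by rw [min_eq_left (mem_range.1 ht).le]
  have hreflect : ∑ t ∈ range n, h (min (n - t) d) = ∑ t ∈ range (n + 1), h (min t d) - h 0 := by
    rw [sum_range_succ', min_eq_left (Nat.zero_le d), add_sub_cancel_right,
      ← sum_range_reflect]
    refine sum_congr rfl fun t ht => ?_
    have := mem_range.1 ht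
    congr 2
    omega
  rw [sum_congr rfl hsplit, sum_add_distrib, htrunc n (by omega), hreflect,
    htrunc (n + 1) (by omega), add_sub_assoc]

lemma one_sub_mul_sum_range_odd_mul_pow (p : ℝ) (d : ℕ) :
    (1 - p) * ∑ k ∈ range d, (1 + 2 * (k : ℝ)) * p ^ k
      = 2 * ∑ k ∈ range d, p ^ k - 1 - (2 * d - 1) * p ^ d := by
  induction d with
  | zero => simp
  | succ d ih =>
    rw [sum_range_succ, sum_range_succ, mul_add, ih]
    push_cast
    ring

lemma sum_range_pow_add_sub (p : ℝ) (d : ℕ) :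
    ∑ k ∈ range d, (p ^ (d + k) - (p ^ d) ^ 2) + ∑ k ∈ range d, (p ^ (d + k) - (p ^ d) ^ 2)
      - (p ^ (d + 0) - (p ^ d) ^ 2)
      = p ^ d * (1 - p) * ∑ k ∈ range d, (1 + 2 * (k : ℝ)) * p ^ k := by
  rw [mul_assoc, one_sub_mul_sum_range_odd_mul_pow, sum_sub_distrib, sum_const, card_range,
    nsmul_eq_mul]
  simp_rw [pow_add, ← mul_sum]
  ring

section Runs

variable {n d : ℕ} [NeZero n]

lemma Fin.natCast_injOn_range : Set.InjOn (Nat.cast : ℕ → Fin n) (range n) := fun a ha b hb h => by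
  simpa [Fin.val_cast_of_lt (mem_range.1 ha), Fin.val_cast_of_lt (mem_range.1 hb)] using
    congrArg Fin.val h

def runSet (d : ℕ) (m : Fin n) : Finset (Fin n) :=
  (range d).image fun l : ℕ => m + (l : Fin n)

lemma injOn_add_natCast (hdn : d ≤ n) (m : Fin n) :
    Set.InjOn (fun l : ℕ => m + (l : Fin n)) (range d) := fun a ha b hb h =>
  Fin.natCast_injOn_range (by simp at ha ⊢; omega) (by simp at hb ⊢; omega) (add_left_cancel h)

lemma prod_range_eq_prod_runSet {M : Type*} [CommMonoid M] (hdn : d ≤ n) (m : Fin n)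
    (ω : Fin n → M) : ∏ l ∈ range d, ω (m + (l : Fin n)) = ∏ i ∈ runSet d m, ω i :=
  (prod_image (injOn_add_natCast hdn m)).symm

lemma card_runSet (hdn : d ≤ n) (m : Fin n) : #(runSet d m) = d := by
  rw [runSet, card_image_of_injOn (injOn_add_natCast hdn m), card_range]

lemma runSet_add (m j : Fin n) : runSet d (m + j) = (runSet d j).image (m + ·) := by
  simp [runSet, image_image, Function.comp_def, add_assoc]

lemma card_runSet_union_add (m j : Fin n) :
    #(runSet d m ∪ runSet d (m + j)) = #(runSet d 0 ∪ runSet d j) := by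
  have h0 : runSet d m = (runSet d 0).image (m + ·) := by simpa using runSet_add (d := d) m 0
  rw [h0, runSet_add, ← image_union, card_image_of_injective _ (add_right_injective m)]

lemma runSet_eq_image_Ico (j : Fin n) :
    runSet d j = (Ico j.val (j.val + d)).image (Nat.cast : ℕ → Fin n) := by
  have hIco : Ico j.val (j.val + d) = (range d).image (j.val + ·) := by
    rw [range_eq_Ico, image_add_left_Ico, add_zero]
  rw [hIco, image_image, runSet]
  refine image_congr fun l _ => ?_
  simp

lemma card_runSet_zero_union_of_add_le {j : Fin n} (h : j.val + d ≤ n) :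
    #(runSet d 0 ∪ runSet d j) = d + min j.val d := by
  have hsdiff : Ico j.val (j.val + d) \ Ico 0 d = Ico (max j.val d) (j.val + d) := by
    ext t; simp only [mem_sdiff, mem_Ico]; omega
  rw [runSet_eq_image_Ico, runSet_eq_image_Ico, ← image_union,
    card_image_of_injOn (Fin.natCast_injOn_range.mono fun t ht => by simp at ht ⊢; omega),
    Fin.val_zero, zero_add, union_comm, ← card_sdiff_add_card, hsdiff, Nat.card_Ico,
    Nat.card_Ico]
  omega

lemma card_runSet_zero_union (hn : 2 * d ≤ n) (j : Fin n) :
    #(runSet d 0 ∪ runSet d j) = d + min (min j.val (n - j.val)) d := by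
  have hj := j.isLt
  rcases le_or_gt (j.val + d) n with h | h
  · rw [card_runSet_zero_union_of_add_le h]
    omega
  · have hneg : (-j).val = n - j.val := by
      rw [Fin.val_neg', Nat.mod_eq_of_lt (by omega)]
    have hsym : #(runSet d 0 ∪ runSet d j) = #(runSet d 0 ∪ runSet d (-j)) := by
      simpa [union_comm] using card_runSet_union_add (d := d) j (-j)
    rw [hsym, card_runSet_zero_union_of_add_le (by omega), hneg]
    omega

lemma sum_pow_card_runSet_union_sub (hn : 2 * d ≤ n) (p : ℝ) (m : Fin n) :
    ∑ m', (p ^ #(runSet d m ∪ runSet d m') - (p ^ d) ^ 2)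
      = p ^ d * (1 - p) * ∑ k ∈ range d, (1 + 2 * (k : ℝ)) * p ^ k := by
  rw [← Equiv.sum_comp (Equiv.addLeft m)]
  simp_rw [Equiv.coe_addLeft, card_runSet_union_add, card_runSet_zero_union hn]
  rw [Fin.sum_univ_eq_sum_range (fun t => p ^ (d + min (min t (n - t)) d) - (p ^ d) ^ 2),
    sum_range_min_min_sub_eq hn (fun k => p ^ (d + k) - (p ^ d) ^ 2) (by ring),
    sum_range_pow_add_sub]

end Runs

theorem runs_second_moment_general
    (n d : ℕ) [NeZero n] (hn : 2 * d ≤ n)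
    (p : ℝ) (hp0 : 0 < p) (hp1 : p < 1) :
    ∫ ω : Fin n → ℝ,
        (∑ m : Fin n, ((∏ l ∈ Finset.range d, ω (m + (l : Fin n))) - p ^ d)) ^ 2
      ∂(Measure.pi fun _ : Fin n =>
          ENNReal.ofReal p • Measure.dirac (1 : ℝ) + ENNReal.ofReal (1 - p) • Measure.dirac 0)
    = n * p ^ d * (1 - p) * ∑ k ∈ Finset.range d, (1 + 2 * (k : ℝ)) * p ^ k := by
  have hdn : d ≤ n := by omega
  have := isProbabilityMeasure_bernoulliReal hp0.le hp1.le
  change ∫ ω, _ ∂Measure.pi (fun _ => bernoulliReal p) = _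
  simp_rw [prod_range_eq_prod_runSet hdn]
  rw [integral_sq_sum_sub_eq univ
    (fun m => by simpa using integrable_prod_mul_prod_pi_bernoulliReal (runSet d m) ∅)
    (fun m m' => integrable_prod_mul_prod_pi_bernoulliReal (runSet d m) (runSet d m'))
    (fun m => by simpa [card_runSet hdn] using
      integral_prod_mul_prod_pi_bernoulliReal hp0.le hp1.le (runSet d m) ∅)]
  simp_rw [integral_prod_mul_prod_pi_bernoulliReal hp0.le hp1.le,
    sum_pow_card_runSet_union_sub hn, sum_const, card_univ, Fintype.card_fin, nsmul_eq_mul]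
  ring

/-- For i.i.d. Bernoulli(p) variables `ξ₁, …, ξₙ` with cyclic convention, the
centered number of d-runs `V_d = ∑_{m=1}^n (ξ_m ⋯ ξ_{m+d-1} - p^d)` satisfies
`E[V_d²] = n p^d (1-p) ∑_{k=0}^{d-1} (1 + 2k) p^k`. -/
theorem runs_second_moment
    (n d : ℕ) [NeZero n] (hd : 1 ≤ d) (hn : 2 * d ≤ n)
    (p : ℝ) (hp0 : 0 < p) (hp1 : p < 1) :
    ∫ ω : Fin n → ℝ,
        (∑ m : Fin n, ((∏ l ∈ Finset.range d, ω (m + (l : Fin n))) - p ^ d)) ^ 2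
      ∂(Measure.pi fun _ : Fin n =>
          ENNReal.ofReal p • Measure.dirac (1 : ℝ) + ENNReal.ofReal (1 - p) • Measure.dirac 0)
    = n * p ^ d * (1 - p) * ∑ k ∈ Finset.range d, (1 + 2 * (k : ℝ)) * p ^ k :=
  runs_second_moment_general n d hn p hp0 hp1
end

section
/- Let a : {1,…,n}² → ℝ be a real array and π a uniform random permutation of {1,…,n}. Then the variance of the single-indexed permutation statistic V := Σ_{i=1}^n a_{i,π(i)} equals Var V = (1/(n-1)) Σ_{i,j=1}^n (a_{i,j} - a_{i,·} - a_{·,j} + a_{·,·})², where a_{i,·} = (1/n) Σ_j a_{i,j}, a_{·,j} = (1/n) Σ_i a_{i,j}, and a_{·,·} = (1/n²) Σ_{i,j} a_{i,j}. -/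
open MeasureTheory ProbabilityTheory

/-- The discrete σ-algebra on the finite permutation group. -/
instance permMeasurableSpace (n : ℕ) : MeasurableSpace (Equiv.Perm (Fin n)) := ⊤

/-!
Subtracting row, column and grand means writes the statistic as `∑ i, d i (π i)` plus a constant,
where `d` has zero row and column sums, so the centred statistic has mean zero. As `Perm α` acts
transitively on `α` and on ordered pairs of distinct points, `π i` is uniform on `α` and, for
`i ≠ k`, `(π i, π k)` is uniform on such pairs. Hence `E[d i (π i) * d k (π k)]` equals
`n⁻¹ ∑ j, d i j ^ 2` for `k = i` and `-(n (n - 1))⁻¹ ∑ j, d i j * d k j` otherwise; the zero column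
sums turn `∑ k ≠ i, d k j` into `-d i j`, so the second moment is
`(n⁻¹ + (n (n - 1))⁻¹) ∑ d i j ^ 2 = (n - 1)⁻¹ ∑ d i j ^ 2`.
-/

open Finset Function

theorem MulAction.card_nsmul_sum_comp_smul {G X M : Type*} [Group G] [MulAction G X]
    [MulAction.IsPretransitive G X] [Fintype G] [Fintype X] [AddCommMonoid M]
    (f : X → M) (x : X) :
    Fintype.card X • ∑ g : G, f (g • x) = Fintype.card G • ∑ y, f y := by
  have sum_eq : ∀ y : X, ∑ g : G, f (g • y) = ∑ g : G, f (g • x) := by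
    intro y
    obtain ⟨h, rfl⟩ := MulAction.exists_smul_eq G x y
    simpa [mul_smul] using Equiv.sum_comp (Equiv.mulRight h) (fun g => f (g • x))
  calc Fintype.card X • ∑ g : G, f (g • x)
      = ∑ y : X, ∑ g : G, f (g • y) := by simp [sum_eq]
    _ = ∑ g : G, ∑ y, f (g • y) := sum_comm
    _ = ∑ _g : G, ∑ y, f y := sum_congr rfl fun g _ => Equiv.sum_comp (MulAction.toPerm g) f
    _ = Fintype.card G • ∑ y, f y := by rw [sum_const, card_univ]

theorem Function.Embedding.sum_finTwo {α M : Type*} [Fintype α] [DecidableEq α]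
    [AddCommGroup M] (F : α → α → M) :
    ∑ e : Fin 2 ↪ α, F (e 0) (e 1) = ∑ a, ∑ b, F a b - ∑ a, F a a := by
  rw [eq_sub_iff_add_eq]
  calc ∑ e : Fin 2 ↪ α, F (e 0) (e 1) + ∑ a, F a a
      = ∑ p : α × α with p.1 ≠ p.2, F p.1 p.2 + ∑ p : α × α with ¬ p.1 ≠ p.2, F p.1 p.2 := by
        congr 1
        · exact (Fintype.sum_equiv twoEmbeddingEquiv _ (fun p => F p.1.1 p.1.2) fun e => rfl).trans
            (sum_subtype _ (by simp) (fun p : α × α => F p.1 p.2)).symm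
        · rw [sum_filter, Fintype.sum_prod_type]
          simp
    _ = ∑ a, ∑ b, F a b := by rw [sum_filter_add_sum_filter_not, Fintype.sum_prod_type]

theorem PMF.integral_uniformOfFintype {α E : Type*} [Fintype α] [Nonempty α] [MeasurableSpace α]
    [MeasurableSingletonClass α] [NormedAddCommGroup E] [NormedSpace ℝ E] [CompleteSpace E]
    (f : α → E) :
    ∫ a, f a ∂(PMF.uniformOfFintype α).toMeasure = (Fintype.card α : ℝ)⁻¹ • ∑ a, f a := by
  simp [PMF.integral_eq_sum, Finset.smul_sum]

theorem MulAction.integral_uniformOfFintype_comp_smul {G X : Type*} [Group G] [MulAction G X]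
    [MulAction.IsPretransitive G X] [Fintype G] [Fintype X] [MeasurableSpace G]
    [MeasurableSingletonClass G] (f : X → ℝ) (x : X) :
    ∫ g, f (g • x) ∂(PMF.uniformOfFintype G).toMeasure = (Fintype.card X : ℝ)⁻¹ * ∑ y, f y := by
  have : Nonempty X := ⟨x⟩
  have card_mul_sum := MulAction.card_nsmul_sum_comp_smul (G := G) f x
  rw [nsmul_eq_mul, nsmul_eq_mul] at card_mul_sum
  rw [PMF.integral_uniformOfFintype, smul_eq_mul]
  field_simp
  linear_combination card_mul_sum

section DoublyCentered

variable {α : Type*} [Fintype α]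

noncomputable def doublyCentered (a : α → α → ℝ) (i j : α) : ℝ :=
  a i j - (1 / (Fintype.card α : ℝ)) * ∑ t, a i t - (1 / (Fintype.card α : ℝ)) * ∑ s, a s j
    + (1 / (Fintype.card α : ℝ) ^ 2) * ∑ s, ∑ t, a s t

theorem sum_doublyCentered_row (a : α → α → ℝ) (i : α) : ∑ j, doublyCentered a i j = 0 := by
  have : Nonempty α := ⟨i⟩
  have : (Fintype.card α : ℝ) ≠ 0 := Nat.cast_ne_zero.2 Fintype.card_ne_zero
  simp only [doublyCentered, sum_add_distrib, sum_sub_distrib, ← mul_sum, sum_const, card_univ,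
    nsmul_eq_mul, sum_comm (γ := α) (f := fun j s => a s j)]
  field_simp
  ring

theorem sum_doublyCentered_col (a : α → α → ℝ) (j : α) : ∑ i, doublyCentered a i j = 0 := by
  have : Nonempty α := ⟨j⟩
  have : (Fintype.card α : ℝ) ≠ 0 := Nat.cast_ne_zero.2 Fintype.card_ne_zero
  simp only [doublyCentered, sum_add_distrib, sum_sub_distrib, ← mul_sum, sum_const, card_univ,
    nsmul_eq_mul]
  field_simp
  ring

theorem sum_apply_perm_eq_sum_doublyCentered_add [Nonempty α] (a : α → α → ℝ)
    (π : Equiv.Perm α) :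
    ∑ i, a i (π i)
      = ∑ i, doublyCentered a i (π i) + (1 / (Fintype.card α : ℝ)) * ∑ s, ∑ t, a s t := by
  have : (Fintype.card α : ℝ) ≠ 0 := Nat.cast_ne_zero.2 Fintype.card_ne_zero
  have sum_cols : ∑ i, ∑ s, a s (π i) = ∑ s, ∑ t, a s t := by
    rw [Equiv.sum_comp π (fun j => ∑ s, a s j), sum_comm]
  simp only [doublyCentered, sum_add_distrib, sum_sub_distrib, ← mul_sum, sum_const, card_univ,
    nsmul_eq_mul, sum_cols]
  field_simp
  ring

end DoublyCentered

namespace Equiv.Perm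

variable {α : Type*} [Fintype α] [DecidableEq α] [MeasurableSpace (Perm α)]
  [MeasurableSingletonClass (Perm α)]

local notation "𝔘" => PMF.toMeasure (PMF.uniformOfFintype (Perm α))

theorem integral_uniformOfFintype_apply (u : α → ℝ) (i : α) :
    ∫ π, u (π i) ∂𝔘 = (Fintype.card α : ℝ)⁻¹ * ∑ j, u j :=
  MulAction.integral_uniformOfFintype_comp_smul u i

theorem integral_uniformOfFintype_apply_mul_apply {i k : α} (hik : i ≠ k) (u v : α → ℝ) :
    ∫ π, u (π i) * v (π k) ∂𝔘
      = ((Fintype.card α : ℝ) * (Fintype.card α - 1))⁻¹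
          * ((∑ j, u j) * (∑ l, v l) - ∑ j, u j * v j) := by
  have := isMultiplyPretransitive α 2
  have h := MulAction.integral_uniformOfFintype_comp_smul (G := Perm α)
    (fun e : Fin 2 ↪ α => u (e 0) * v (e 1)) (Embedding.embFinTwo hik)
  simp only [Embedding.smul_apply, Embedding.embFinTwo_apply_zero, Embedding.embFinTwo_apply_one,
    Equiv.Perm.smul_def] at h
  rw [h, Fintype.card_embedding_eq, Fintype.card_fin, Nat.cast_descFactorial_two,
    Embedding.sum_finTwo (fun j l => u j * v l), sum_mul_sum]

theorem integral_uniformOfFintype_sum_apply_of_sum_eq_zero (d : α → α → ℝ)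
    (hrow : ∀ i, ∑ j, d i j = 0) :
    ∫ π, ∑ i, d i (π i) ∂𝔘 = 0 := by
  rw [integral_finsetSum _ fun i _ => Integrable.of_finite]
  simp [integral_uniformOfFintype_apply, hrow]

theorem integral_uniformOfFintype_sum_apply_sq (d : α → α → ℝ) (hα : 1 < Fintype.card α)
    (hrow : ∀ i, ∑ j, d i j = 0) (hcol : ∀ j, ∑ i, d i j = 0) :
    ∫ π, (∑ i, d i (π i)) ^ 2 ∂𝔘 = ((Fintype.card α : ℝ) - 1)⁻¹ * ∑ i, ∑ j, d i j ^ 2 := by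
  have : (Fintype.card α : ℝ) ≠ 0 := by positivity
  have : (Fintype.card α : ℝ) - 1 ≠ 0 := sub_ne_zero.2 (by exact_mod_cast hα.ne')
  have row_sum : ∀ i, ∑ k, ∫ π, d i (π i) * d k (π k) ∂𝔘
      = ((Fintype.card α : ℝ) - 1)⁻¹ * ∑ j, d i j ^ 2 := by
    intro i
    have off_diag : ∀ k ∈ univ.erase i, ∫ π, d i (π i) * d k (π k) ∂𝔘
        = -((Fintype.card α : ℝ) * (Fintype.card α - 1))⁻¹ * ∑ j, d i j * d k j := by
      intro k hk
      rw [integral_uniformOfFintype_apply_mul_apply (ne_of_mem_erase hk).symm, hrow, zero_mul,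
        zero_sub]
      ring
    have cross : ∑ k ∈ univ.erase i, ∑ j, d i j * d k j = -∑ j, d i j ^ 2 := by
      rw [sum_comm]
      simp [← mul_sum, sum_erase_eq_sub, hcol, sq]
    rw [← add_sum_erase _ _ (mem_univ i), sum_congr rfl off_diag,
      integral_uniformOfFintype_apply (fun j => d i j * d i j), ← mul_sum, cross]
    field_simp
    ring
  calc ∫ π, (∑ i, d i (π i)) ^ 2 ∂𝔘 = ∑ i, ∑ k, ∫ π, d i (π i) * d k (π k) ∂𝔘 := by
        simp_rw [sq, sum_mul_sum]
        rw [integral_finsetSum _ fun i _ => Integrable.of_finite]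
        simp_rw [integral_finsetSum _ fun k _ => Integrable.of_finite]
    _ = ((Fintype.card α : ℝ) - 1)⁻¹ * ∑ i, ∑ j, d i j ^ 2 := by simp_rw [row_sum, ← mul_sum]

theorem variance_uniformOfFintype_sum_apply (a : α → α → ℝ) (hα : 1 < Fintype.card α) :
    Var[fun π : Perm α => ∑ i, a i (π i); 𝔘]
      = ((Fintype.card α : ℝ) - 1)⁻¹ * ∑ i, ∑ j, doublyCentered a i j ^ 2 := by
  have : Nonempty α := Fintype.card_pos_iff.1 (by omega)
  simp_rw [sum_apply_perm_eq_sum_doublyCentered_add a]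
  rw [variance_add_const .of_discrete,
    variance_of_integral_eq_zero .of_discrete
      (integral_uniformOfFintype_sum_apply_of_sum_eq_zero _ (sum_doublyCentered_row a)),
    integral_uniformOfFintype_sum_apply_sq _ hα (sum_doublyCentered_row a)
      (sum_doublyCentered_col a)]

end Equiv.Perm

/-- Hoeffding's variance formula: For `π` a uniform random permutation of
`{1,…,n}`, `n ≥ 2`, the statistic `V = ∑ i, a i (π i)` satisfies
`Var V = (1/(n-1)) ∑_{i,j} (a_{ij} - a_{i·} - a_{·j} + a_{··})²`. -/
theorem hoeffding_variance_formula
    (n : ℕ) (hn : 2 ≤ n) (a : Fin n → Fin n → ℝ) :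
    variance (fun π : Equiv.Perm (Fin n) => ∑ i, a i (π i))
        (PMF.uniformOfFintype (Equiv.Perm (Fin n))).toMeasure
      = (1 / ((n : ℝ) - 1)) * ∑ i, ∑ j,
          (a i j - (1 / (n : ℝ)) * ∑ t, a i t - (1 / (n : ℝ)) * ∑ s, a s j
            + (1 / (n : ℝ) ^ 2) * ∑ s, ∑ t, a s t) ^ 2 := by
  rw [Equiv.Perm.variance_uniformOfFintype_sum_apply a (by rw [Fintype.card_fin]; omega), one_div]
  simp only [doublyCentered, Fintype.card_fin]
end

section
/- Let Σ be a positive definite d×d matrix and Λ an invertible d×d matrix. Then the matrix Σ̃ := (1/2)(Λ Σ Λ^{-t} + Σ) equals Σ if and only if Λ̂ := Σ^{-1/2} Λ Σ^{1/2} is symmetric, where Λ^{-t} denotes the transpose of Λ^{-1}. -/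
/-!
Halving and cancelling, `Σ̃ = Σ` says `ΛΣΛ⁻ᵗ = Σ`, i.e. `ΛΣ = ΣΛᵗ`. With `Σ = Q²` and `Q`
symmetric, `Λ̂ᵗ = QΛᵗQ⁻¹`, and conjugating the equation `Λ̂ = Λ̂ᵗ` by `Q` on both sides turns it
into the same identity `ΛQ² = Q²Λᵗ`.
-/

open Matrix

theorem half_smul_add_eq_right_iff {R M : Type*} [DivisionRing R] [Invertible (2 : R)]
    [AddCommGroup M] [Module R M] (x y : M) : (1 / 2 : R) • (x + y) = y ↔ x = y := by
  rw [one_div, ← invOf_eq_inv, ← midpoint_eq_smul_add, midpoint_eq_right_iff]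

namespace Matrix

variable {n R : Type*} [Fintype n] [DecidableEq n] [CommRing R]

theorem mul_mul_inv_transpose_eq_iff (A S : Matrix n n R) [Invertible A] :
    A * S * A⁻¹ᵀ = S ↔ A * S = S * Aᵀ := by
  rw [transpose_nonsing_inv, mul_inv_eq_iff_eq_mul_of_invertible]

theorem inv_mul_mul_eq_mul_mul_inv_iff (Q A B : Matrix n n R) [Invertible Q] :
    Q⁻¹ * A * Q = Q * B * Q⁻¹ ↔ A * (Q * Q) = Q * Q * B := by
  rw [Matrix.mul_assoc, inv_mul_eq_iff_eq_mul_of_invertible, ← Matrix.mul_assoc Q, eq_comm,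
    mul_inv_eq_iff_eq_mul_of_invertible, eq_comm, Matrix.mul_assoc A, Matrix.mul_assoc Q]

theorem isSymm_inv_mul_mul_iff {Q : Matrix n n R} (hQ : Q.IsSymm) [Invertible Q]
    (A : Matrix n n R) : (Q⁻¹ * A * Q).IsSymm ↔ A * (Q * Q) = Q * Q * Aᵀ := by
  rw [IsSymm, eq_comm, transpose_mul, transpose_mul, transpose_nonsing_inv, hQ.eq,
    ← Matrix.mul_assoc, inv_mul_mul_eq_mul_mul_inv_iff]

end Matrix

theorem sigma_tilde_eq_sigma_iff_lambda_hat_symm_general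
    (d : ℕ) (Sig Λ Q : Matrix (Fin d) (Fin d) ℝ)
    (hΛ : IsUnit Λ.det)
    (hQ : Q.PosDef) (hQsq : Q * Q = Sig) :
    (1/2 : ℝ) • (Λ * Sig * (Λ⁻¹)ᵀ + Sig) = Sig ↔ (Q⁻¹ * Λ * Q).IsSymm := by
  have := Λ.invertibleOfIsUnitDet hΛ
  have := hQ.isUnit.invertible
  rw [half_smul_add_eq_right_iff, mul_mul_inv_transpose_eq_iff,
    isSymm_inv_mul_mul_iff (isHermitian_iff_isSymm.mp hQ.isHermitian), hQsq]

/-- For `Sig` positive definite with symmetric positive definite square root `Q`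
and `Λ` invertible, `(1/2)(Λ Sig Λ^{-t} + Sig) = Sig` iff `Q⁻¹ Λ Q` is symmetric. -/
theorem sigma_tilde_eq_sigma_iff_lambda_hat_symm
    (d : ℕ) (Sig Λ Q : Matrix (Fin d) (Fin d) ℝ)
    (hSig : Sig.PosDef) (hΛ : IsUnit Λ.det)
    (hQ : Q.PosDef) (hQsq : Q * Q = Sig) :
    (1/2 : ℝ) • (Λ * Sig * (Λ⁻¹)ᵀ + Sig) = Sig ↔ (Q⁻¹ * Λ * Q).IsSymm :=
  sigma_tilde_eq_sigma_iff_lambda_hat_symm_general d Sig Λ Q hΛ hQ hQsq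
end
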